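/- Let R be a reduced commutative ring and let I be a pure ideal of R. Then R is Gaussian if and only if R⋈I is Gaussian. -/

import Mathlib

universe u

open scoped TensorProduct

namespace Paper

/-- The amalgamated duplication `R ⋈ I`, as the subring
`{(r, s) : s - r ∈ I} = {(r, r+i) : r ∈ R, i ∈ I}` of `R × R`. -/
def dup (R : Type*) [CommRing R] (I : Ideal R) : Subring (R × R) where
  carrier := {p | p.2 - p.1 ∈ I}
  zero_mem' := by simp
  one_mem' := by simp
  add_mem' := by
    intro a b ha hb
    simp only [Set.mem_setOf_eq, Prod.fst_add, Prod.snd_add] at *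
    have h : a.2 + b.2 - (a.1 + b.1) = (a.2 - a.1) + (b.2 - b.1) := by ring
    rw [h]; exact I.add_mem ha hb
  neg_mem' := by
    intro a ha
    simp only [Set.mem_setOf_eq, Prod.fst_neg, Prod.snd_neg] at *
    have h : -a.2 - -a.1 = -(a.2 - a.1) := by ring
    rw [h]; exact I.neg_mem ha
  mul_mem' := by
    intro a b ha hb
    simp only [Set.mem_setOf_eq, Prod.fst_mul, Prod.snd_mul] at *
    have h : a.2 * b.2 - a.1 * b.1 = a.2 * (b.2 - b.1) + (a.2 - a.1) * b.1 := by ring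
    rw [h]; exact I.add_mem (I.mul_mem_left _ hb) (I.mul_mem_right _ ha)

lemma mem_dup {R : Type*} [CommRing R] {I : Ideal R} {p : R × R} :
    p ∈ dup R I ↔ p.2 - p.1 ∈ I := Iff.rfl

/-- The diagonal embedding `R → R ⋈ I`, `r ↦ (r, r)`. -/
def diag (R : Type*) [CommRing R] (I : Ideal R) : R →+* dup R I where
  toFun r := ⟨(r, r), mem_dup.mpr (by simp)⟩
  map_one' := rfl
  map_mul' _ _ := rfl
  map_zero' := rfl
  map_add' _ _ := rfl

noncomputable instance dupAlgebra (R : Type*) [CommRing R] (I : Ideal R) :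
    Algebra R (dup R I) := (diag R I).toAlgebra

/-- `pdLE R n M` means that `M` has projective dimension `≤ n` as an `R`-module. -/
def pdLE (R : Type u) [CommRing R] : ℕ → (M : Type u) → [AddCommGroup M] → [Module R M] → Prop
  | 0, M, _, _ => Module.Projective R M
  | (n + 1), M, _, _ => pdLE R n (LinearMap.ker (Finsupp.linearCombination R (id : M → M)))

/-- `fdLE R n M` means that `M` has flat dimension `≤ n` as an `R`-module. -/
def fdLE (R : Type u) [CommRing R] : ℕ → (M : Type u) → [AddCommGroup M] → [Module R M] → Prop
  | 0, M, _, _ => Module.Flat R M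
  | (n + 1), M, _, _ => fdLE R n (LinearMap.ker (Finsupp.linearCombination R (id : M → M)))

/-- The projective dimension of an `R`-module `M`, as an element of `ℕ∞`. -/
noncomputable def projDim (R : Type u) [CommRing R] (M : Type u) [AddCommGroup M]
    [Module R M] : ℕ∞ :=
  sInf {n : ℕ∞ | ∃ k : ℕ, (k : ℕ∞) = n ∧ pdLE R k M}

/-- The flat dimension of an `R`-module `M`, as an element of `ℕ∞`. -/
noncomputable def flatDim (R : Type u) [CommRing R] (M : Type u) [AddCommGroup M]
    [Module R M] : ℕ∞ :=
  sInf {n : ℕ∞ | ∃ k : ℕ, (k : ℕ∞) = n ∧ fdLE R k M}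

/-- The global dimension of `R`: the supremum of projective dimensions of `R`-modules. -/
noncomputable def gldim (R : Type u) [CommRing R] : ℕ∞ :=
  ⨆ (M : Type u) (_ : AddCommGroup M) (_ : Module R M), projDim R M

/-- The weak global dimension of `R`: the supremum of flat dimensions of `R`-modules. -/
noncomputable def wdim (R : Type u) [CommRing R] : ℕ∞ :=
  ⨆ (M : Type u) (_ : AddCommGroup M) (_ : Module R M), flatDim R M


/-- The first projection `R ⋈ I → R`, `(r, r+i) ↦ r`. -/
def dupFst (R : Type*) [CommRing R] (I : Ideal R) : dup R I →+* R :=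
  (RingHom.fst R R).comp (dup R I).subtype

/-- The second projection `R ⋈ I → R`, `(r, r+i) ↦ r + i`. -/
def dupSnd (R : Type*) [CommRing R] (I : Ideal R) : dup R I →+* R :=
  (RingHom.snd R R).comp (dup R I).subtype

/-- A commutative ring is von Neumann regular if every `a` satisfies `a = a²b` for some `b`. -/
def IsVNRegular (R : Type*) [CommRing R] : Prop := ∀ a : R, ∃ b : R, a = a * a * b

/-- A commutative ring is semihereditary if every finitely generated ideal is projective. -/
def IsSemihereditary (R : Type*) [CommRing R] : Prop :=
  ∀ J : Ideal R, J.FG → Module.Projective R J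

/-- A commutative ring is coherent if every finitely generated ideal is finitely presented. -/
def IsCoherentRing (R : Type*) [CommRing R] : Prop :=
  ∀ J : Ideal R, J.FG → Module.FinitePresentation R J

/-- The content of a polynomial: the ideal generated by its coefficients. -/
def contentIdeal {R : Type*} [CommRing R] (f : Polynomial R) : Ideal R :=
  Ideal.span (Set.range f.coeff)

/-- A commutative ring is Gaussian if `c(fg) = c(f)c(g)` for all polynomials `f, g`. -/
def IsGaussianRing (R : Type*) [CommRing R] : Prop :=
  ∀ f g : Polynomial R, contentIdeal (f * g) = contentIdeal f * contentIdeal g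

/-- `R` is a `(1,d)`-ring if every finitely presented (i.e. `1`-presented) `R`-module has
projective dimension at most `d`. -/
def IsOneDRing (R : Type u) [CommRing R] (d : ℕ) : Prop :=
  ∀ (M : Type u) [AddCommGroup M] [Module R M],
    Module.FinitePresentation R M → projDim R M ≤ (d : ℕ∞)

/-- The trace ideal of an `R`-module `M`: the sum of the images of all `R`-linear maps
`M → R`. -/
def traceIdeal (R : Type*) [CommRing R] (M : Type*) [AddCommGroup M] [Module R M] : Ideal R :=
  ⨆ f : M →ₗ[R] R, LinearMap.range f

/-!
Gaussianity passes to quotients, which gives one direction through the projection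
`R ⋈ I → R`. Conversely, `R ⋈ I` is a subdirect product of two copies of `R`, via the
projections `π₁, π₂` with kernels `0 × I` and `I × 0`. If `R` is Gaussian then
`c(f)c(g) ⊆ (c(fg) + ker π₁) ∩ (c(fg) + ker π₂)`, and this intersection is `c(fg)`: by purity
every `(0, a)` with `a ∈ I` equals `(0, e)(0, a)` for some `e ∈ I`, while `(0, e)` kills `I × 0`.
-/

open scoped Polynomial

section Content

variable {R S : Type*} [CommRing R] [CommRing S]

lemma contentIdeal_eq_polynomial_contentIdeal (f : R[X]) :
    contentIdeal f = f.contentIdeal := by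
  refine le_antisymm (Ideal.span_le.mpr ?_) (Ideal.span_mono ?_)
  · rintro _ ⟨n, rfl⟩
    exact f.coeff_mem_contentIdeal n
  · intro c hc
    obtain ⟨n, -, rfl⟩ := Polynomial.mem_coeffs_iff.mp hc
    exact ⟨n, rfl⟩

lemma contentIdeal_map (φ : R →+* S) (f : R[X]) :
    contentIdeal (f.map φ) = (contentIdeal f).map φ := by
  simp only [contentIdeal_eq_polynomial_contentIdeal,
    Polynomial.contentIdeal_map_eq_map_contentIdeal]

lemma contentIdeal_mul_le (f g : R[X]) :
    contentIdeal (f * g) ≤ contentIdeal f * contentIdeal g := by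
  simpa only [contentIdeal_eq_polynomial_contentIdeal] using
    f.contentIdeal_mul_le_mul_contentIdeal g

lemma IsGaussianRing.of_surjective {φ : R →+* S} (hφ : Function.Surjective φ)
    (hR : IsGaussianRing R) : IsGaussianRing S := by
  intro f g
  obtain ⟨F, rfl⟩ := Polynomial.map_surjective φ hφ f
  obtain ⟨G, rfl⟩ := Polynomial.map_surjective φ hφ g
  rw [← Polynomial.map_mul, contentIdeal_map, contentIdeal_map, contentIdeal_map, hR,
    Ideal.map_mul]

lemma contentIdeal_mul_le_sup_ker {π : R →+* S} (hπ : Function.Surjective π)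
    (hS : IsGaussianRing S) (f g : R[X]) :
    contentIdeal f * contentIdeal g ≤ contentIdeal (f * g) ⊔ RingHom.ker π := by
  rw [← Ideal.comap_map_of_surjective' π hπ]
  refine (Ideal.le_comap_map (f := π)).trans (le_of_eq ?_)
  rw [Ideal.map_mul, ← contentIdeal_map, ← contentIdeal_map, ← hS, ← Polynomial.map_mul,
    contentIdeal_map]

end Content

lemma sup_inf_sup_le_of_exists_local_unit {R : Type*} [CommRing R] (J K₁ K₂ : Ideal R)
    (h : ∀ k ∈ K₁, ∃ e : R, e * k = k ∧ ∀ k' ∈ K₂, e * k' = 0) :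
    (J ⊔ K₁) ⊓ (J ⊔ K₂) ≤ J := by
  rintro x ⟨hx₁, hx₂⟩
  obtain ⟨u, hu, k₁, hk₁, rfl⟩ := Submodule.mem_sup.mp hx₁
  obtain ⟨v, hv, k₂, hk₂, huv⟩ := Submodule.mem_sup.mp hx₂
  obtain ⟨e, he₁, he₂⟩ := h k₁ hk₁
  have hsplit : u + k₁ = (u - e * u) + e * v := by
    linear_combination (-e) * huv + he₂ k₂ hk₂ - he₁
  rw [hsplit]
  exact J.add_mem (J.sub_mem hu (J.mul_mem_left e hu)) (J.mul_mem_left e hv)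

lemma IsGaussianRing.of_exists_local_unit_ker {R S₁ S₂ : Type*} [CommRing R] [CommRing S₁]
    [CommRing S₂] {π₁ : R →+* S₁} {π₂ : R →+* S₂} (hπ₁ : Function.Surjective π₁)
    (hπ₂ : Function.Surjective π₂) (hS₁ : IsGaussianRing S₁) (hS₂ : IsGaussianRing S₂)
    (h : ∀ k ∈ RingHom.ker π₁, ∃ e : R, e * k = k ∧ ∀ k' ∈ RingHom.ker π₂, e * k' = 0) :
    IsGaussianRing R := fun f g =>
  le_antisymm (contentIdeal_mul_le f g) <|
    (le_inf (contentIdeal_mul_le_sup_ker hπ₁ hS₁ f g)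
      (contentIdeal_mul_le_sup_ker hπ₂ hS₂ f g)).trans
      (sup_inf_sup_le_of_exists_local_unit _ _ _ h)

section Duplication

variable (R : Type*) [CommRing R] (I : Ideal R)

lemma dupFst_surjective : Function.Surjective (dupFst R I) :=
  fun r => ⟨diag R I r, rfl⟩

lemma dupSnd_surjective : Function.Surjective (dupSnd R I) :=
  fun r => ⟨diag R I r, rfl⟩

variable {R I}

lemma exists_local_unit_ker_dupFst [I.Pure] (k : dup R I) (hk : k ∈ RingHom.ker (dupFst R I)) :
    ∃ e : dup R I, e * k = k ∧ ∀ k' ∈ RingHom.ker (dupSnd R I), e * k' = 0 := by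
  have hk₁ : (k : R × R).1 = 0 := hk
  have hkI : (k : R × R).2 ∈ I := by simpa [hk₁] using mem_dup.mp k.2
  obtain ⟨e, heI, he⟩ := Ideal.exists_eq_mul_of_pure hkI
  refine ⟨⟨(0, e), mem_dup.mpr (by simpa using heI)⟩, ?_, fun k' hk' => ?_⟩
  · ext
    · simp [hk₁]
    · simp only [Subring.coe_mul, Prod.snd_mul]
      rw [mul_comm, ← he]
  · have hk'₂ : (k' : R × R).2 = 0 := hk'
    ext <;> simp [hk'₂]

end Duplication

theorem isGaussian_dup_iff_general (R : Type u) [CommRing R] (I : Ideal R)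
    (hpure : Module.Flat R (R ⧸ I)) :
    IsGaussianRing R ↔ IsGaussianRing (dup R I) := by
  have : I.Pure := hpure
  refine ⟨fun hR => ?_, fun h => h.of_surjective (dupFst_surjective R I)⟩
  exact IsGaussianRing.of_exists_local_unit_ker (dupFst_surjective R I)
    (dupSnd_surjective R I) hR hR exists_local_unit_ker_dupFst

/-- If `R` is a reduced ring and `I` a pure ideal of `R`, then `R` is Gaussian if and only
if `R ⋈ I` is Gaussian. -/
theorem isGaussian_dup_iff (R : Type u) [CommRing R] [IsReduced R] (I : Ideal R)
    (hpure : Module.Flat R (R ⧸ I)) :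
    IsGaussianRing R ↔ IsGaussianRing (dup R I) :=
  isGaussian_dup_iff_general R I hpure

end Paper
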